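/- arXiv:1907.13110 — 4 statements merged into one kernel-verified Lean document; each statement's English description precedes it below -/
import Mathlib

section
/- Let c ≥ 2, ñ ≥ 3, n = cñ, and let G be the c-barbell graph with Laplacian matrix L. Then: (a) for every bridge edge (kñ, kñ+1), k = 1,…,c−1, there exists v ∈ ℝⁿ with L v = e_{kñ} − e_{kñ+1}, and every such v satisfies v_{kñ} − v_{kñ+1} = 1 (i.e., the effective resistance of every bridge edge equals 1); (b) for every edge (i,j) with both endpoints in the same complete block, there exists v ∈ ℝⁿ with L v = e_i − e_j, and every such v satisfies v_i − v_j = 2/ñ (i.e., the effective resistance of every clique edge equals 2/ñ). -/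
open Matrix BigOperators Finset

/-- The `c`-barbell graph on `c*tn` vertices (0-indexed): for each `k = 0,…,c−1` the block
`B_k = {k*tn,…,(k+1)*tn−1}` induces a complete graph (two vertices are in the same block iff
their values have the same quotient by `tn`), and for each `k = 1,…,c−1` there is a bridge edge
between vertex `k*tn − 1` and vertex `k*tn` (i.e. between consecutive vertices `i, i+1` with
`(i+1) % tn = 0`). -/
def cBarbell (c tn : ℕ) : SimpleGraph (Fin (c * tn)) where
  Adj i j := i ≠ j ∧ (i.val / tn = j.val / tn ∨
    (j.val = i.val + 1 ∧ (i.val + 1) % tn = 0) ∨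
    (i.val = j.val + 1 ∧ (j.val + 1) % tn = 0))
  symm := by
    constructor
    rintro i j ⟨hne, h⟩
    refine ⟨hne.symm, ?_⟩
    rcases h with h | h | h
    · exact Or.inl h.symm
    · exact Or.inr (Or.inr h)
    · exact Or.inr (Or.inl h)
  loopless := by constructor; rintro i ⟨hne, -⟩; exact hne rfl

instance (c tn : ℕ) : DecidableRel (cBarbell c tn).Adj := fun i j =>
  inferInstanceAs (Decidable (i ≠ j ∧ (i.val / tn = j.val / tn ∨
    (j.val = i.val + 1 ∧ (i.val + 1) % tn = 0) ∨
    (i.val = j.val + 1 ∧ (j.val + 1) % tn = 0))))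

/-- The standard basis vector `e i` of `ℝⁿ`. -/
def stdBasisVec {n : ℕ} (i : Fin n) : Fin n → ℝ := fun k => if k = i then 1 else 0

/-! Let `[a, b]` be an interval of vertices that is a clique and that no edge jumps over, i.e.
no edge joins a vertex below `a` (or `b`) to one above it. Then the clamp `x ↦ max a (min x b)`
retracts the graph onto `[a, b]` and collapses every edge not inside it, so pulling back the
complete-graph potential `(eᵢ - eⱼ) / #[a, b]` along it solves `L v = eᵢ - eⱼ` with
`v i - v j = 2 / #[a, b]`. The difference `v i - v j` across an edge is the same for every
solution, since `L w = 0` forces `w` to agree at adjacent vertices. A bridge edge is such a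
2-clique, and a block is such an `ñ`-clique. -/

namespace SimpleGraph

variable {V : Type*} [DecidableEq V] {G : SimpleGraph V} [DecidableRel G.Adj]

theorem IsClique.sum_filter_adj_sub {B : Finset V} (hB : G.IsClique (B : Set V)) {x : V}
    (hx : x ∈ B) (f : V → ℝ) :
    ∑ y ∈ B with G.Adj x y, (f x - f y) = #B * f x - ∑ y ∈ B, f y := by
  have hnonadj : ∀ y ∈ B, ¬G.Adj x y → y = x := fun y hy h => by
    by_contra hne
    exact h (hB hx hy (Ne.symm hne))
  rw [sum_filter, ← nsmul_eq_mul, ← sum_const, ← sum_sub_distrib]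
  refine sum_congr rfl fun y hy => ?_
  split_ifs with h
  · rfl
  · rw [hnonadj y hy h, sub_self]

variable [Fintype V] (G)

def HasEffectiveResistance (i j : V) (r : ℝ) : Prop :=
  (∃ v : V → ℝ, G.lapMatrix ℝ *ᵥ v = Pi.single i 1 - Pi.single j 1) ∧
    ∀ v : V → ℝ, G.lapMatrix ℝ *ᵥ v = Pi.single i 1 - Pi.single j 1 → v i - v j = r

theorem lapMatrix_mulVec_apply_eq_sum_sub (v : V → ℝ) (x : V) :
    (G.lapMatrix ℝ *ᵥ v) x = ∑ y ∈ G.neighborFinset x, (v x - v y) := by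
  rw [lapMatrix_mulVec_apply, sum_sub_distrib, sum_const, card_neighborFinset_eq_degree,
    nsmul_eq_mul]

theorem sub_eq_sub_of_lapMatrix_mulVec_eq {v w : V → ℝ}
    (h : G.lapMatrix ℝ *ᵥ v = G.lapMatrix ℝ *ᵥ w) {i j : V} (hij : G.Adj i j) :
    v i - v j = w i - w j := by
  have := (G.lapMatrix_mulVec_eq_zero_iff_forall_adj (x := v - w)).1
    (by rw [mulVec_sub, h, sub_self]) i j hij
  simp only [Pi.sub_apply] at this
  linarith

theorem hasEffectiveResistance_of_adj {i j : V} (hij : G.Adj i j) {v : V → ℝ}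
    (hv : G.lapMatrix ℝ *ᵥ v = Pi.single i 1 - Pi.single j 1) :
    G.HasEffectiveResistance i j (v i - v j) :=
  ⟨⟨v, hv⟩, fun _ hw => G.sub_eq_sub_of_lapMatrix_mulVec_eq (hw.trans hv.symm) hij⟩

theorem lapMatrix_mulVec_comp_of_retract {B : Finset V} {π : V → V} (hfix : ∀ x ∈ B, π x = x)
    (hcollapse : ∀ x y, G.Adj x y → x ∉ B → π x = π y) (f : V → ℝ) (x : V) :
    (G.lapMatrix ℝ *ᵥ (f ∘ π)) x = if x ∈ B then ∑ y ∈ B with G.Adj x y, (f x - f y) else 0 := by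
  rw [lapMatrix_mulVec_apply_eq_sum_sub]
  split_ifs with hx
  · have hout : ∑ y ∈ G.neighborFinset x with y ∉ B, ((f ∘ π) x - (f ∘ π) y) = 0 :=
      sum_eq_zero fun y hy => by
        simp only [mem_filter, mem_neighborFinset] at hy
        simp [hcollapse y x hy.1.symm hy.2]
    have hin : {y ∈ G.neighborFinset x | y ∈ B} = {y ∈ B | G.Adj x y} := by
      ext y
      simp [and_comm]
    rw [← sum_filter_add_sum_filter_not _ (· ∈ B), hout, add_zero, hin]
    exact sum_congr rfl fun y hy => by simp [hfix x hx, hfix y (mem_filter.1 hy).1]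
  · exact sum_eq_zero fun y hy => by
      simp [hcollapse x y ((mem_neighborFinset G x y).1 hy) hx]

theorem hasEffectiveResistance_of_isClique_of_retract {B : Finset V} (hB : G.IsClique (B : Set V))
    {π : V → V} (hfix : ∀ x ∈ B, π x = x) (hcollapse : ∀ x y, G.Adj x y → x ∉ B → π x = π y)
    {i j : V} (hi : i ∈ B) (hj : j ∈ B) (hij : i ≠ j) :
    G.HasEffectiveResistance i j (2 / #B) := by
  have hcard : (#B : ℝ) ≠ 0 := Nat.cast_ne_zero.2 (card_ne_zero_of_mem hi)
  set f : V → ℝ := (#B : ℝ)⁻¹ • (Pi.single i 1 - Pi.single j 1)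
  have hsum : ∑ y ∈ B, f y = 0 := by
    simp [f, ← mul_sum, sum_sub_distrib, sum_pi_single', hi, hj]
  have hsol : G.lapMatrix ℝ *ᵥ (f ∘ π) = Pi.single i 1 - Pi.single j 1 := by
    funext x
    rw [G.lapMatrix_mulVec_comp_of_retract hfix hcollapse]
    split_ifs with hx
    · rw [hB.sum_filter_adj_sub hx, hsum]
      simp [f, hcard]
    · have hxi : x ≠ i := fun h => hx (h ▸ hi)
      have hxj : x ≠ j := fun h => hx (h ▸ hj)
      simp [hxi, hxj]
  convert G.hasEffectiveResistance_of_adj (hB hi hj hij) hsol using 1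
  simp [f, hfix i hi, hfix j hj, hij, hij.symm]
  ring

end SimpleGraph

theorem SimpleGraph.projIcc_eq_of_adj {V : Type*} [LinearOrder V] [LocallyFiniteOrder V]
    {G : SimpleGraph V} {a b : V} (hab : a ≤ b) (ha : ∀ x y, G.Adj x y → x < a → y ≤ a)
    (hb : ∀ x y, G.Adj x y → x < b → y ≤ b) {x y : V} (hxy : G.Adj x y)
    (hx : x ∉ Finset.Icc a b) : (Set.projIcc a b hab x : V) = Set.projIcc a b hab y := by
  rw [Finset.mem_Icc, not_and_or, not_le, not_le] at hx
  rcases hx with hx | hx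
  · rw [Set.projIcc_of_le_left _ hx.le, Set.projIcc_of_le_left _ (ha x y hxy hx)]
  · have hy : b ≤ y := not_lt.1 fun hy => (hb y x hxy.symm hy).not_gt hx
    rw [Set.projIcc_of_right_le _ hx.le, Set.projIcc_of_right_le _ hy]

theorem SimpleGraph.hasEffectiveResistance_of_isClique_Icc {V : Type*} [Fintype V]
    [DecidableEq V] [LinearOrder V] [LocallyFiniteOrder V] {G : SimpleGraph V} [DecidableRel G.Adj]
    {a b : V} (ha : ∀ x y, G.Adj x y → x < a → y ≤ a) (hb : ∀ x y, G.Adj x y → x < b → y ≤ b)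
    (hB : G.IsClique (Set.Icc a b)) {i j : V} (hi : i ∈ Finset.Icc a b) (hj : j ∈ Finset.Icc a b)
    (hij : i ≠ j) : G.HasEffectiveResistance i j (2 / #(Finset.Icc a b)) :=
  have hab : a ≤ b := (Finset.mem_Icc.1 hi).1.trans (Finset.mem_Icc.1 hi).2
  G.hasEffectiveResistance_of_isClique_of_retract (by rwa [Finset.coe_Icc])
    (fun x hx => congrArg Subtype.val (Set.projIcc_of_mem hab (Finset.mem_Icc.1 hx)))
    (fun _ _ => projIcc_eq_of_adj hab ha hb) hi hj hij

theorem stdBasisVec_eq_single {n : ℕ} (i : Fin n) : stdBasisVec i = Pi.single i 1 := by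
  ext k
  simp [stdBasisVec, Pi.single_apply]

section cBarbell

variable {c tn : ℕ}

theorem cBarbell_div_eq_of_adj {x y : Fin (c * tn)} (h : (cBarbell c tn).Adj x y)
    (hxy : x.val + 1 < y.val) : x.val / tn = y.val / tn := by
  rcases h.2 with h | ⟨h, -⟩ | ⟨h, -⟩ <;> omega

/-- `m` is the first or the last vertex of a block. -/
theorem cBarbell_adj_le_of_lt {m x y : Fin (c * tn)} (hm : tn ∣ m.val ∨ tn ∣ m.val + 1)
    (h : (cBarbell c tn).Adj x y) (hx : x < m) : y ≤ m := by
  by_contra! hy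
  rw [Fin.lt_def] at hx hy
  obtain ⟨d, hd, hxd, hdy⟩ : ∃ d, tn ∣ d ∧ x.val < d ∧ d ≤ y.val := by
    rcases hm with hm | hm
    · exact ⟨m, hm, hx, hy.le⟩
    · exact ⟨m + 1, hm, by omega, hy⟩
  have := cBarbell_div_eq_of_adj h (by omega)
  have := Nat.div_lt_div_of_lt_of_dvd hd hxd
  have := Nat.div_le_div_right (c := tn) hdy
  omega

theorem cBarbell_hasEffectiveResistance_bridge {i j : Fin (c * tn)} (hj : j.val = i.val + 1)
    (hi : (i.val + 1) % tn = 0) : (cBarbell c tn).HasEffectiveResistance i j 1 := by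
  have hij : (cBarbell c tn).Adj i j := ⟨Fin.ne_of_val_ne (by omega), Or.inr (Or.inl ⟨hj, hi⟩)⟩
  have hB : (cBarbell c tn).IsClique (Set.Icc i j) := by
    intro x hx y hy hxy
    simp only [Set.mem_Icc, Fin.le_def] at hx hy
    obtain ⟨rfl, rfl⟩ | ⟨rfl, rfl⟩ : x = i ∧ y = j ∨ x = j ∧ y = i := by
      simp only [Fin.ext_iff]
      omega
    exacts [hij, hij.symm]
  have hcard : #(Finset.Icc i j) = 2 := by
    rw [Fin.card_Icc]
    omega
  have h := SimpleGraph.hasEffectiveResistance_of_isClique_Icc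
    (fun _ _ => cBarbell_adj_le_of_lt (Or.inr (Nat.dvd_of_mod_eq_zero hi)))
    (fun _ _ => cBarbell_adj_le_of_lt (Or.inl (hj ▸ Nat.dvd_of_mod_eq_zero hi)))
    hB (Finset.left_mem_Icc.2 (Fin.le_def.2 (by omega)))
    (Finset.right_mem_Icc.2 (Fin.le_def.2 (by omega))) hij.ne
  rwa [hcard, Nat.cast_ofNat, div_self two_ne_zero] at h

theorem cBarbell_hasEffectiveResistance_of_div_eq {i j : Fin (c * tn)} (hij : i ≠ j)
    (hblock : i.val / tn = j.val / tn) : (cBarbell c tn).HasEffectiveResistance i j (2 / tn) := by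
  have htn : 0 < tn := Nat.pos_of_mul_pos_left i.pos
  set k := i.val / tn
  have hk : k * tn + tn ≤ c * tn := by
    rw [← Nat.succ_mul]
    exact Nat.mul_le_mul_right _ ((Nat.div_lt_iff_lt_mul htn).2 i.isLt)
  let a : Fin (c * tn) := ⟨k * tn, by omega⟩
  let b : Fin (c * tn) := ⟨k * tn + tn - 1, by omega⟩
  have hmem (x : Fin (c * tn)) : x ∈ Finset.Icc a b ↔ x.val / tn = k := by
    rw [Finset.mem_Icc, Fin.le_def, Fin.le_def, Nat.div_eq_iff htn]
  have hB : (cBarbell c tn).IsClique (Set.Icc a b) := by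
    rw [← Finset.coe_Icc]
    exact fun x hx y hy hxy => ⟨hxy, Or.inl (((hmem x).1 hx).trans ((hmem y).1 hy).symm)⟩
  have hcard : #(Finset.Icc a b) = tn := by
    rw [Fin.card_Icc]
    change k * tn + tn - 1 + 1 - k * tn = tn
    omega
  have hb : b.val + 1 = (k + 1) * tn := by
    simp only [b, Nat.succ_mul]
    omega
  have h := SimpleGraph.hasEffectiveResistance_of_isClique_Icc
    (fun _ _ => cBarbell_adj_le_of_lt (m := a) (Or.inl (Dvd.intro_left k rfl)))
    (fun _ _ => cBarbell_adj_le_of_lt (Or.inr (hb ▸ Dvd.intro_left _ rfl))) hB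
    ((hmem i).2 rfl) ((hmem j).2 hblock.symm) hij
  rwa [hcard] at h

end cBarbell

theorem stmt3_general (c tn : ℕ)
    (L : Matrix (Fin (c * tn)) (Fin (c * tn)) ℝ) (hL : L = (cBarbell c tn).lapMatrix ℝ) :
    -- (a) the effective resistance of every bridge edge equals `1`
    (∀ i j : Fin (c * tn), j.val = i.val + 1 → (i.val + 1) % tn = 0 →
      (∃ v : Fin (c * tn) → ℝ, L *ᵥ v = stdBasisVec i - stdBasisVec j) ∧
      (∀ v : Fin (c * tn) → ℝ, L *ᵥ v = stdBasisVec i - stdBasisVec j →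
        v i - v j = 1)) ∧
    -- (b) the effective resistance of every clique edge equals `2/tn`
    (∀ i j : Fin (c * tn), (cBarbell c tn).Adj i j → i.val / tn = j.val / tn →
      (∃ v : Fin (c * tn) → ℝ, L *ᵥ v = stdBasisVec i - stdBasisVec j) ∧
      (∀ v : Fin (c * tn) → ℝ, L *ᵥ v = stdBasisVec i - stdBasisVec j →
        v i - v j = 2 / tn)) := by
  subst hL
  simp only [stdBasisVec_eq_single]
  exact ⟨fun _ _ hj hi => cBarbell_hasEffectiveResistance_bridge hj hi,
    fun _ _ hij hblock => cBarbell_hasEffectiveResistance_of_div_eq hij.ne hblock⟩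

theorem stmt3 (c tn : ℕ) (hc : 2 ≤ c) (htn : 3 ≤ tn)
    (L : Matrix (Fin (c * tn)) (Fin (c * tn)) ℝ) (hL : L = (cBarbell c tn).lapMatrix ℝ) :
    -- (a) the effective resistance of every bridge edge equals `1`
    (∀ i j : Fin (c * tn), j.val = i.val + 1 → (i.val + 1) % tn = 0 →
      (∃ v : Fin (c * tn) → ℝ, L *ᵥ v = stdBasisVec i - stdBasisVec j) ∧
      (∀ v : Fin (c * tn) → ℝ, L *ᵥ v = stdBasisVec i - stdBasisVec j →
        v i - v j = 1)) ∧
    -- (b) the effective resistance of every clique edge equals `2/tn`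
    (∀ i j : Fin (c * tn), (cBarbell c tn).Adj i j → i.val / tn = j.val / tn →
      (∃ v : Fin (c * tn) → ℝ, L *ᵥ v = stdBasisVec i - stdBasisVec j) ∧
      (∀ v : Fin (c * tn) → ℝ, L *ᵥ v = stdBasisVec i - stdBasisVec j →
        v i - v j = 2 / tn)) :=
  stmt3_general c tn L hL
end

section
/- Let ñ ≥ 3, n = 2ñ, and let W̄_{P^r} be the effective-resistance gossiping matrix of the barbell graph K_ñ−K_ñ. Then the second largest eigenvalue of W̄_{P^r} equals 1 − 1/(n−1) + (1/2)·√(S_n^r), where S_n^r = (4n − 8)/(n(n−1)²). -/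
open Matrix BigOperators Finset

/-- The barbell graph `K_tn − K_tn` on `2tn` vertices (0-indexed): the vertices `0,…,tn−1` form a
complete graph, the vertices `tn,…,2tn−1` form a complete graph, and there is one bridge edge
between `i* = tn−1` and `j* = tn`. -/
def barbell (tn : ℕ) : SimpleGraph (Fin (2 * tn)) where
  Adj i j := i ≠ j ∧ ((i.val < tn ↔ j.val < tn) ∨
    (i.val = tn - 1 ∧ j.val = tn) ∨ (i.val = tn ∧ j.val = tn - 1))
  symm := by
    constructor
    rintro i j ⟨hne, h⟩
    refine ⟨hne.symm, ?_⟩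
    tauto
  loopless := by constructor; rintro i ⟨hne, -⟩; exact hne rfl

instance (tn : ℕ) : DecidableRel (barbell tn).Adj := fun i j =>
  inferInstanceAs (Decidable (i ≠ j ∧ ((i.val < tn ↔ j.val < tn) ∨
    (i.val = tn - 1 ∧ j.val = tn) ∨ (i.val = tn ∧ j.val = tn - 1))))

/-- The effective-resistance edge-activation probabilities on the barbell graph with `n = 2tn`:
`1/(2(n−1))` on the bridge edge, `2/(n(n−1))` on clique edges (edges within a block), `0` else. -/
noncomputable def probResBarbell (tn : ℕ) : Matrix (Fin (2 * tn)) (Fin (2 * tn)) ℝ :=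
  Matrix.of fun i j =>
    if (barbell tn).Adj i j then
      (if i.val < tn ↔ j.val < tn then 2 / ((2 * (tn : ℝ)) * (2 * (tn : ℝ) - 1))
       else 1 / (2 * (2 * (tn : ℝ) - 1)))
    else 0

/-- The effective-resistance gossiping matrix `W̄_{P^r} = I − D^r/2 + P^r` of the barbell graph,
where `D^r_{ii} = 2 Σ_j P^r_{ij}`. -/
noncomputable def gossipResBarbell (tn : ℕ) : Matrix (Fin (2 * tn)) (Fin (2 * tn)) ℝ :=
  (1 : Matrix (Fin (2 * tn)) (Fin (2 * tn)) ℝ)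
    - (1 / 2 : ℝ) • Matrix.diagonal (fun i => 2 * ∑ j, probResBarbell tn i j)
    + probResBarbell tn

/-!
With `p` the clique probability, `q` the bridge probability, `𝟙_L`, `𝟙_R` the indicators of the
two cliques and `d = e_{i*} - e_{j*}`, the matrix `P^r` is the rank-three matrix
`K = p (𝟙_L 𝟙_Lᵀ + 𝟙_R 𝟙_Rᵀ) - q d dᵀ` plus a diagonal matrix. The diagonal part cancels in
`I - D^r/2 + P^r`, and `K` has constant row sums `p ñ = 2q = 1/(n-1)`, so the gossiping matrix is
`(1 - 2q) I + K`. Since `K = Aᵀ B` with `A, B` of size `3 × n`, its characteristic polynomial is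
`(X - (1 - 2q))^(n-3)` times that of the shifted `3 × 3` matrix `B Aᵀ`, whose roots are `1` and
`1 - 2q ± s` with `s² = 4q² - 2pq = S_n^r / 4`. A monotone enumeration of the roots is determined
by the characteristic polynomial, so the second largest eigenvalue is `1 - 2q + s`.
-/

open Polynomial

namespace Matrix

variable {m n R : Type*} [CommRing R]

theorem sum_vecMulVec_eq_transpose_mul [Fintype n] (u v : n → m → R) :
    ∑ k, vecMulVec (u k) (v k) = (of u)ᵀ * of v := by
  ext i j
  simp [sum_apply, vecMulVec_apply, mul_apply]

variable [Fintype m] [DecidableEq m]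

theorem charpoly_smul_one_add_mul [Fintype n] [DecidableEq n] (c : R) (A : Matrix m n R)
    (B : Matrix n m R) (h : Fintype.card n ≤ Fintype.card m) :
    (c • 1 + A * B).charpoly =
      (X - C c) ^ (Fintype.card m - Fintype.card n) * (B * A).charpoly.comp (X - C c) := by
  have : c • 1 + A * B = A * B - scalar m (-c) := by
    rw [scalar_apply, ← smul_one_eq_diagonal, neg_smul, sub_neg_eq_add, add_comm]
  rw [this, charpoly_sub_scalar, charpoly_mul_comm_of_le A B h, map_neg, ← sub_eq_add_neg,
    mul_comp, X_pow_comp]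

theorem charpoly_smul_one_add_sum_vecMulVec {r : ℕ} (c : R) (u v : Fin r → m → R)
    (h : r ≤ Fintype.card m) :
    (c • 1 + ∑ k, vecMulVec (u k) (v k)).charpoly =
      (X - C c) ^ (Fintype.card m - r) *
        (of fun k l => v k ⬝ᵥ u l).charpoly.comp (X - C c) := by
  rw [sum_vecMulVec_eq_transpose_mul, charpoly_smul_one_add_mul c _ _ (by simpa using h),
    Fintype.card_fin]
  rfl

end Matrix

section Gossip

variable {m R : Type*} [Fintype m] [DecidableEq m] [Field R] [NeZero (2 : R)]

def gossipMatrix (P : Matrix m m R) : Matrix m m R :=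
  1 - (1 / 2 : R) • diagonal (fun i => 2 * ∑ j, P i j) + P

theorem gossipMatrix_add_diagonal (K : Matrix m m R) (g : m → R) :
    gossipMatrix (K + diagonal g) = gossipMatrix K := by
  ext i j
  by_cases h : i = j
  · subst h
    simp only [gossipMatrix, one_div, Matrix.add_apply, diagonal_apply, sum_add_distrib,
      sum_ite_eq, mem_univ, ↓reduceIte, Matrix.sub_apply, one_apply_eq, Matrix.smul_apply,
      smul_eq_mul]
    field_simp
    ring
  · simp [gossipMatrix, h]

theorem gossipMatrix_eq_of_sum_eq {K : Matrix m m R} {c : R} (hK : ∀ i, ∑ j, K i j = c) :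
    gossipMatrix K = (1 - c) • 1 + K := by
  ext i j
  by_cases h : i = j
  · subst h
    simp only [gossipMatrix, one_div, hK, Matrix.add_apply, Matrix.sub_apply, one_apply_eq,
      Matrix.smul_apply, diagonal_apply_eq, smul_eq_mul, add_left_inj]
    field_simp
  · simp [gossipMatrix, h]

end Gossip

theorem List.ofFn_eq_of_prod_X_sub_C_eq {K : Type*} [CommRing K] [IsDomain K] [LinearOrder K]
    {m : ℕ} {μ : Fin m → K} (hμ : Monotone μ) {l : List K} (hl : l.SortedLE)
    (h : ∏ i, (X - C (μ i)) = (l.map fun a => X - C a).prod) : List.ofFn μ = l := by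
  refine List.Perm.eq_of_sortedLE hμ.sortedLE_ofFn hl (Multiset.coe_eq_coe.mp ?_)
  calc (List.ofFn μ : Multiset K) = (∏ i, (X - C (μ i))).roots := by
        rw [← Fin.univ_val_map, Finset.prod_eq_multiset_prod,
          ← roots_multiset_prod_X_sub_C (univ.val.map μ), Multiset.map_map]
        rfl
    _ = l := by
        rw [h, ← Multiset.prod_coe, ← Multiset.map_coe, roots_multiset_prod_X_sub_C]

namespace Barbell

variable (tn : ℕ)

def leftClique : Fin (2 * tn) → ℝ := fun i => if (i : ℕ) < tn then 1 else 0

def rightClique : Fin (2 * tn) → ℝ := fun i => if (i : ℕ) < tn then 0 else 1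

theorem leftClique_add_rightClique : leftClique tn + rightClique tn = 1 := by
  ext i
  simp only [Pi.add_apply, Pi.one_apply, leftClique, rightClique]
  split_ifs <;> simp

theorem sum_leftClique : ∑ i, leftClique tn i = tn := by
  simp only [leftClique]
  rw [Finset.sum_boole, Fin.card_filter_val_lt, min_eq_right (by omega)]

theorem sum_rightClique : ∑ i, rightClique tn i = tn := by
  have h := congrArg (fun v => ∑ i, v i) (leftClique_add_rightClique tn)
  simp only [Pi.add_apply, Finset.sum_add_distrib, sum_leftClique, Pi.one_apply,
    Finset.sum_const, Finset.card_univ, Fintype.card_fin, nsmul_one, Nat.cast_mul] at h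
  push_cast at h
  linarith

theorem leftClique_dotProduct_leftClique : leftClique tn ⬝ᵥ leftClique tn = tn := by
  rw [← sum_leftClique]
  simp +contextual [dotProduct, leftClique]

theorem rightClique_dotProduct_rightClique : rightClique tn ⬝ᵥ rightClique tn = tn := by
  rw [← sum_rightClique]
  simp +contextual [dotProduct, rightClique]

theorem leftClique_dotProduct_rightClique : leftClique tn ⬝ᵥ rightClique tn = 0 := by
  simp +contextual [dotProduct, leftClique, rightClique]

noncomputable def cliqueProb : ℝ := 2 / ((2 * (tn : ℝ)) * (2 * (tn : ℝ) - 1))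

noncomputable def bridgeProb : ℝ := 1 / (2 * (2 * (tn : ℝ) - 1))

theorem two_mul_bridgeProb : 2 * bridgeProb tn = 1 / (2 * tn - 1) := by
  rw [bridgeProb, mul_one_div, div_mul_cancel_left₀ two_ne_zero, one_div]

noncomputable def eigenvalueList (s : ℝ) : List ℝ :=
  (1 - 2 * bridgeProb tn - s) :: List.replicate (2 * tn - 3) (1 - 2 * bridgeProb tn) ++
    [1 - 2 * bridgeProb tn + s, 1]

theorem eigenvalueList_sortedLE {s : ℝ} (hs₀ : 0 ≤ s) (hs : s ≤ 2 * bridgeProb tn) :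
    (eigenvalueList tn s).SortedLE := by
  rw [List.sortedLE_iff_pairwise]
  simp only [eigenvalueList, List.cons_append, List.pairwise_cons, List.mem_append,
    List.mem_replicate, ne_eq, List.mem_cons, List.not_mem_nil, or_false, tsub_le_iff_right,
    List.pairwise_append, List.pairwise_replicate, Nat.reduceAdd, Std.le_refl, or_true, forall_eq,
    IsEmpty.forall_iff, implies_true, List.Pairwise.nil, and_self, and_true, forall_eq_or_imp,
    and_imp, forall_eq_apply_imp_iff, le_add_iff_nonneg_right, Nat.ofNat_pos,
    mul_nonneg_iff_of_pos_left, true_and]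
  refine ⟨?_, by linarith, fun _ => ⟨hs₀, by linarith⟩⟩
  rintro a (⟨-, rfl⟩ | rfl | rfl) <;> linarith

theorem getElem?_eigenvalueList (htn : 2 ≤ tn) (s : ℝ) :
    (eigenvalueList tn s)[2 * tn - 2]? = some (1 - 2 * bridgeProb tn + s) := by
  rw [eigenvalueList, show 2 * tn - 2 = (2 * tn - 3) + 1 by omega, List.cons_append,
    List.getElem?_cons_succ, List.getElem?_append_right (by simp), List.length_replicate,
    Nat.sub_self]
  rfl

variable [NeZero tn]

theorem two_mul_sub_one_pos : 0 < 2 * (tn : ℝ) - 1 := by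
  have : (1 : ℝ) ≤ tn := by exact_mod_cast NeZero.one_le
  linarith

theorem bridgeProb_nonneg : 0 ≤ bridgeProb tn := by
  have := two_mul_sub_one_pos tn
  unfold bridgeProb
  positivity

theorem cliqueProb_nonneg : 0 ≤ cliqueProb tn := by
  have := two_mul_sub_one_pos tn
  unfold cliqueProb
  positivity

theorem cliqueProb_mul_card : cliqueProb tn * tn = 2 * bridgeProb tn := by
  have : (tn : ℝ) ≠ 0 := by exact_mod_cast NeZero.ne tn
  simp only [cliqueProb, bridgeProb]
  field_simp

theorem four_mul_bridgeProb_sq_sub :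
    4 * bridgeProb tn ^ 2 - 2 * cliqueProb tn * bridgeProb tn =
      (4 * (2 * tn) - 8) / ((2 * tn) * (2 * tn - 1) ^ 2) / 4 := by
  have := two_mul_sub_one_pos tn
  have : (tn : ℝ) ≠ 0 := by exact_mod_cast NeZero.ne tn
  simp only [bridgeProb, cliqueProb]
  field_simp
  ring

def bridgeLeft : Fin (2 * tn) := ⟨tn - 1, by have := NeZero.pos tn; omega⟩

def bridgeRight : Fin (2 * tn) := ⟨tn, by have := NeZero.pos tn; omega⟩

def bridgeVec : Fin (2 * tn) → ℝ := Pi.single (bridgeLeft tn) 1 - Pi.single (bridgeRight tn) 1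

theorem sum_bridgeVec : ∑ i, bridgeVec tn i = 0 := by
  simp [bridgeVec]

theorem leftClique_dotProduct_bridgeVec : leftClique tn ⬝ᵥ bridgeVec tn = 1 := by
  simp [bridgeVec, leftClique, bridgeLeft, bridgeRight, dotProduct_sub, NeZero.pos]

theorem rightClique_dotProduct_bridgeVec : rightClique tn ⬝ᵥ bridgeVec tn = -1 := by
  simp [bridgeVec, rightClique, bridgeLeft, bridgeRight, dotProduct_sub, NeZero.pos]

theorem bridgeVec_dotProduct_bridgeVec : bridgeVec tn ⬝ᵥ bridgeVec tn = 2 := by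
  have : bridgeLeft tn ≠ bridgeRight tn := by
    simp only [bridgeLeft, bridgeRight, ne_eq, Fin.mk.injEq]
    have := NeZero.pos tn
    omega
  simp only [bridgeVec, dotProduct_sub, dotProduct_single, Pi.sub_apply, Pi.single_eq_same,
    Pi.single_eq_of_ne this, Pi.single_eq_of_ne this.symm, sub_zero, mul_one, zero_sub,
    sub_neg_eq_add]
  norm_num

noncomputable def leftFactors : Fin 3 → Fin (2 * tn) → ℝ :=
  ![cliqueProb tn • leftClique tn, cliqueProb tn • rightClique tn,
    -bridgeProb tn • bridgeVec tn]

def rightFactors : Fin 3 → Fin (2 * tn) → ℝ := ![leftClique tn, rightClique tn, bridgeVec tn]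

theorem probResBarbell_eq :
    probResBarbell tn = ∑ k, vecMulVec (leftFactors tn k) (rightFactors tn k) +
      diagonal (fun i => bridgeProb tn *
        (Pi.single (bridgeLeft tn) 1 + Pi.single (bridgeRight tn) 1 : Fin (2 * tn) → ℝ) i -
          cliqueProb tn) := by
  ext i j
  simp only [probResBarbell, barbell, leftFactors, rightFactors, bridgeVec, leftClique,
    rightClique, bridgeLeft, bridgeRight, Fin.sum_univ_three, Matrix.add_apply, vecMulVec_apply,
    diagonal_apply, Pi.single_apply, Fin.ext_iff, of_apply, cons_val_zero, cons_val_one,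
    cons_val_two, head_cons, tail_cons, Pi.smul_apply, Pi.sub_apply, Pi.add_apply, smul_eq_mul,
    ne_eq]
  split_ifs <;> first | (exfalso; omega) | (simp only [bridgeProb, cliqueProb]; ring)

theorem sum_lowRank_apply (i : Fin (2 * tn)) :
    ∑ j, (∑ k, vecMulVec (leftFactors tn k) (rightFactors tn k)) i j = 2 * bridgeProb tn := by
  have hLR := congrFun (leftClique_add_rightClique tn) i
  simp only [Pi.add_apply, Pi.one_apply] at hLR
  simp only [Matrix.sum_apply, vecMulVec_apply]
  rw [Finset.sum_comm]
  simp only [← Finset.mul_sum, Fin.sum_univ_three, leftFactors, rightFactors, cons_val_zero,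
    cons_val_one, cons_val_two, head_cons, tail_cons, sum_leftClique, sum_rightClique,
    sum_bridgeVec, Pi.smul_apply, smul_eq_mul]
  linear_combination cliqueProb_mul_card tn + cliqueProb tn * tn * hLR

theorem gossipResBarbell_eq :
    gossipResBarbell tn = (1 - 2 * bridgeProb tn) • 1 +
      ∑ k, vecMulVec (leftFactors tn k) (rightFactors tn k) := by
  rw [show gossipResBarbell tn = gossipMatrix (probResBarbell tn) from rfl, probResBarbell_eq,
    gossipMatrix_add_diagonal, gossipMatrix_eq_of_sum_eq (sum_lowRank_apply tn)]

theorem rightFactors_dotProduct_leftFactors :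
    (of fun k l => rightFactors tn k ⬝ᵥ leftFactors tn l) =
      !![2 * bridgeProb tn, 0, -bridgeProb tn; 0, 2 * bridgeProb tn, bridgeProb tn;
        cliqueProb tn, -cliqueProb tn, -(2 * bridgeProb tn)] := by
  ext k l
  fin_cases k <;> fin_cases l <;>
    simp [leftFactors, rightFactors, dotProduct_smul, leftClique_dotProduct_leftClique,
      rightClique_dotProduct_rightClique, leftClique_dotProduct_rightClique,
      leftClique_dotProduct_bridgeVec, rightClique_dotProduct_bridgeVec,
      bridgeVec_dotProduct_bridgeVec, dotProduct_comm (bridgeVec tn),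
      dotProduct_comm (rightClique tn) (leftClique tn), cliqueProb_mul_card, mul_comm]

theorem charpoly_rightFactors_dotProduct_leftFactors :
    (of fun k l => rightFactors tn k ⬝ᵥ leftFactors tn l).charpoly =
      (X - C (2 * bridgeProb tn)) *
        (X ^ 2 - C (4 * bridgeProb tn ^ 2 - 2 * cliqueProb tn * bridgeProb tn)) := by
  rw [rightFactors_dotProduct_leftFactors, charpoly, det_fin_three]
  simp only [Fin.isValue, charmatrix_apply_eq, charmatrix_apply_ne, of_apply, cons_val',
    cons_val_zero, cons_val_fin_one, cons_val_one, Matrix.cons_val, ne_eq, Fin.reduceEq,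
    not_false_eq_true, map_mul, map_neg, map_sub, map_pow, map_zero, C_ofNat]
  ring

theorem charpoly_gossipResBarbell (htn : 2 ≤ tn) :
    (gossipResBarbell tn).charpoly = (X - C (1 - 2 * bridgeProb tn)) ^ (2 * tn - 3) *
      ((X - C 1) * ((X - C (1 - 2 * bridgeProb tn)) ^ 2 -
        C (4 * bridgeProb tn ^ 2 - 2 * cliqueProb tn * bridgeProb tn))) := by
  rw [gossipResBarbell_eq,
    charpoly_smul_one_add_sum_vecMulVec _ _ _ (by rw [Fintype.card_fin]; omega),
    charpoly_rightFactors_dotProduct_leftFactors, Fintype.card_fin]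
  simp only [mul_comp, sub_comp, pow_comp, X_comp, C_comp, map_sub, map_one]
  ring

theorem charpoly_gossipResBarbell_eq_prod (htn : 2 ≤ tn) {s : ℝ}
    (hs : s ^ 2 = 4 * bridgeProb tn ^ 2 - 2 * cliqueProb tn * bridgeProb tn) :
    (gossipResBarbell tn).charpoly = ((eigenvalueList tn s).map fun a => X - C a).prod := by
  rw [charpoly_gossipResBarbell tn htn, ← hs]
  simp only [eigenvalueList, List.cons_append, List.map_cons, List.map_append, List.map_replicate,
    List.prod_cons, List.prod_append, List.prod_replicate, List.map_nil, List.prod_nil, mul_one,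
    map_sub, map_add, map_pow]
  ring

end Barbell

open Barbell in
theorem stmt7 (tn : ℕ) (htn : 3 ≤ tn) (n : ℝ) (hn : n = 2 * (tn : ℝ))
    (Snr : ℝ) (hSnr : Snr = (4 * n - 8) / (n * (n - 1) ^ 2)) :
    ∀ μ : Fin (2 * tn) → ℝ, Monotone μ →
      (gossipResBarbell tn).charpoly =
        ∏ i : Fin (2 * tn), (Polynomial.X - Polynomial.C (μ i)) →
      μ ⟨2 * tn - 2, by omega⟩ = 1 - 1 / (n - 1) + (1 / 2) * Real.sqrt Snr := by
  intro μ hμ hchar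
  have : NeZero tn := ⟨by omega⟩
  set s := Real.sqrt Snr / 2 with hs_def
  have hSnr₀ : 0 ≤ Snr := by
    have : (3 : ℝ) ≤ tn := by exact_mod_cast htn
    rw [hSnr, hn]
    apply div_nonneg <;> nlinarith
  have hs : s ^ 2 = 4 * bridgeProb tn ^ 2 - 2 * cliqueProb tn * bridgeProb tn := by
    rw [four_mul_bridgeProb_sq_sub, ← hn, ← hSnr, div_pow, Real.sq_sqrt hSnr₀]
    norm_num
  have hs₀ : 0 ≤ s := by positivity
  have hs_le : s ≤ 2 * bridgeProb tn := by
    nlinarith [bridgeProb_nonneg tn, mul_nonneg (cliqueProb_nonneg tn) (bridgeProb_nonneg tn)]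
  have hlist := List.ofFn_eq_of_prod_X_sub_C_eq hμ (eigenvalueList_sortedLE tn hs₀ hs_le)
    (hchar ▸ charpoly_gossipResBarbell_eq_prod tn (by omega) hs)
  have hμ_eq := congrArg (·[2 * tn - 2]?) hlist
  simp only [getElem?_eigenvalueList tn (by omega), List.getElem?_ofFn,
    dif_pos (by omega : 2 * tn - 2 < 2 * tn), Option.some_inj] at hμ_eq
  rw [hμ_eq, two_mul_bridgeProb, hn, hs_def]
  ring
end

section
/- Let c ≥ 2, ñ ≥ 3, n = cñ, and let G be the c-barbell graph. Let W be an n×n symmetric matrix with nonnegative entries and all row sums equal to 1, such that W_{ij} > 0 whenever (i,j) is an edge of G and W_{ij} = 0 whenever i ≠ j are not adjacent in G. Suppose S₀ ⊆ {1,…,n} is nonempty with |S₀| ≤ n/2 and its complement can be written as the disjoint union of two nonempty sets C₁ and C₂ such that each of C₁ and C₂ induces a connected subgraph of G and no edge of G joins C₁ to C₂. Then there exists a nonempty proper subset S̃ of {1,…,n} with Φ_{S̃}(W) < Φ_{S₀}(W), where Φ_S(W) = (1/|S|)·Σ_{i∈S, j∉S} W_{ij}. -/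
/-!
Adjoin the piece `C₂` to `S₀`. Since no weight joins `C₂` to `C₁`, the cut of `S₀ ∪ C₂` consists
of the edges from `S₀` to `C₁` only, so the numerator of the conductance does not grow while the
denominator grows by `|C₂|`. The inequality is strict because the cut of `S₀` carries positive
weight: the barbell graph contains the path `0 – 1 – ⋯ – (n−1)`, hence is connected.
-/

open Matrix BigOperators Finset

/-- The subset conductance `Φ_S(W) = (1/|S|) Σ_{i∈S, j∉S} W_{ij}`. -/
noncomputable def subsetConductance {n : ℕ} (W : Matrix (Fin n) (Fin n) ℝ)
    (S : Finset (Fin n)) : ℝ :=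
  (∑ i ∈ S, ∑ j ∈ Sᶜ, W i j) / (S.card : ℝ)


lemma cBarbell_adj_of_val_succ {c tn : ℕ} {i j : Fin (c * tn)} (hij : i.val + 1 = j.val) :
    (cBarbell c tn).Adj i j := by
  refine ⟨fun h => by omega, ?_⟩
  by_cases hdvd : tn ∣ i.val + 1
  · exact Or.inr (Or.inl ⟨hij.symm, Nat.mod_eq_zero_of_dvd hdvd⟩)
  · left
    rw [← hij, Nat.succ_div, if_neg hdvd, add_zero]

lemma pathGraph_le_cBarbell (c tn : ℕ) : SimpleGraph.pathGraph (c * tn) ≤ cBarbell c tn := by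
  intro i j hij
  rcases SimpleGraph.pathGraph_adj.1 hij with h | h
  · exact cBarbell_adj_of_val_succ h
  · exact (cBarbell_adj_of_val_succ h).symm

lemma cBarbell_preconnected (c tn : ℕ) : (cBarbell c tn).Preconnected :=
  (SimpleGraph.pathGraph_preconnected _).mono (pathGraph_le_cBarbell c tn)

lemma SimpleGraph.Preconnected.exists_adj_mem_notMem {V : Type*} {G : SimpleGraph V}
    (hG : G.Preconnected) {S : Set V} {u v : V} (hu : u ∈ S) (hv : v ∉ S) :
    ∃ x ∈ S, ∃ y ∉ S, G.Adj x y := by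
  obtain ⟨p⟩ := hG u v
  obtain ⟨d, -, hd₁, hd₂⟩ := p.exists_boundary_dart S hu hv
  exact ⟨d.fst, hd₁, d.snd, hd₂, d.adj⟩

lemma sum_cut_pos_of_preconnected {ι : Type*} [Fintype ι] [DecidableEq ι]
    {G : SimpleGraph ι} (hG : G.Preconnected) {W : Matrix ι ι ℝ} (hnn : ∀ i j, 0 ≤ W i j) (hpos : ∀ i j, G.Adj i j → 0 < W i j)
    {S : Finset ι} (hS : S.Nonempty) (hSc : Sᶜ.Nonempty) :
    0 < ∑ i ∈ S, ∑ j ∈ Sᶜ, W i j := by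
  obtain ⟨u, hu⟩ := hS
  obtain ⟨v, hv⟩ := hSc
  obtain ⟨i, hi, j, hj, hij⟩ :=
    hG.exists_adj_mem_notMem (S := (S : Set ι)) (mem_coe.2 hu) (by simpa using hv)
  exact sum_pos' (fun i _ => sum_nonneg fun j _ => hnn i j)
    ⟨i, hi, sum_pos' (fun j _ => hnn i j) ⟨j, by simpa using hj, hpos i j hij⟩⟩

lemma subsetConductance_union_lt {n : ℕ} {W : Matrix (Fin n) (Fin n) ℝ}
    (hnn : ∀ i j, 0 ≤ W i j) {S C : Finset (Fin n)} (hS : S.Nonempty) (hC : C.Nonempty)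
    (hSC : Disjoint S C) (hcut : 0 < ∑ i ∈ S, ∑ j ∈ Sᶜ, W i j)
    (hC_isolated : ∀ i ∈ C, ∀ j ∉ S ∪ C, W i j = 0) :
    subsetConductance W (S ∪ C) < subsetConductance W S := by
  have hcut_le : ∑ i ∈ S ∪ C, ∑ j ∈ (S ∪ C)ᶜ, W i j ≤ ∑ i ∈ S, ∑ j ∈ Sᶜ, W i j := by
    rw [sum_union hSC, sum_eq_zero (s := C) fun i hi =>
      sum_eq_zero fun j hj => hC_isolated i hi j (mem_compl.1 hj), add_zero]
    exact sum_le_sum fun i _ => sum_le_sum_of_subset_of_nonneg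
      (compl_subset_compl.2 subset_union_left) fun j _ _ => hnn i j
  have hcard : (S.card : ℝ) < (S ∪ C).card := by
    rw [card_union_of_disjoint hSC]
    exact_mod_cast Nat.lt_add_of_pos_right hC.card_pos
  have hS_pos : (0 : ℝ) < S.card := by exact_mod_cast hS.card_pos
  unfold subsetConductance
  calc _ ≤ (∑ i ∈ S, ∑ j ∈ Sᶜ, W i j) / (S ∪ C).card := by gcongr
    _ < _ := div_lt_div_of_pos_left hcut hS_pos hcard

theorem stmt10_general (c tn : ℕ)
    (W : Matrix (Fin (c * tn)) (Fin (c * tn)) ℝ)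
    (hnn : ∀ i j, 0 ≤ W i j)
    (hpos : ∀ i j, (cBarbell c tn).Adj i j → 0 < W i j)
    (hzero : ∀ i j, i ≠ j → ¬(cBarbell c tn).Adj i j → W i j = 0)
    (S0 C1 C2 : Finset (Fin (c * tn)))
    (hS0ne : S0.Nonempty)
    (hC1ne : C1.Nonempty) (hC2ne : C2.Nonempty)
    (hdisj : Disjoint C1 C2) (hunion : S0ᶜ = C1 ∪ C2)
    (hnoedge : ∀ i ∈ C1, ∀ j ∈ C2, ¬(cBarbell c tn).Adj i j) :
    ∃ St : Finset (Fin (c * tn)), St.Nonempty ∧ St ≠ Finset.univ ∧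
      subsetConductance W St < subsetConductance W S0 := by
  have hcompl : (S0 ∪ C2)ᶜ = C1 := by
    rw [compl_union, hunion, union_inter_distrib_right, inter_compl, union_empty,
      inter_eq_left.2 (subset_compl_iff_disjoint_right.2 hdisj)]
  have hS0C2 : Disjoint S0 C2 := by
    rw [← subset_compl_iff_disjoint_left, hunion]; exact subset_union_right
  refine ⟨S0 ∪ C2, hS0ne.mono subset_union_left, ?_, ?_⟩
  · intro h
    rw [h, compl_univ] at hcompl
    exact hC1ne.ne_empty hcompl.symm
  · refine subsetConductance_union_lt hnn hS0ne hC2ne hS0C2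
      (sum_cut_pos_of_preconnected (cBarbell_preconnected c tn) hnn hpos hS0ne ?_) ?_
    · rw [hunion]; exact hC1ne.mono subset_union_left
    · intro i hi j hj
      rw [← mem_compl, hcompl] at hj
      exact hzero i j (fun h => disjoint_left.1 hdisj hj (h ▸ hi))
        (fun hij => hnoedge j hj i hi hij.symm)

/-- If the complement of `S₀` splits into two nonempty connected pieces with no edges between
them (a "two-cut set"), then some nonempty proper subset has strictly smaller conductance. -/
theorem stmt10 (c tn : ℕ) (hc : 2 ≤ c) (htn : 3 ≤ tn)
    (W : Matrix (Fin (c * tn)) (Fin (c * tn)) ℝ)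
    (hsymm : W.IsSymm) (hnn : ∀ i j, 0 ≤ W i j) (hrow : ∀ i, ∑ j, W i j = 1)
    (hpos : ∀ i j, (cBarbell c tn).Adj i j → 0 < W i j)
    (hzero : ∀ i j, i ≠ j → ¬(cBarbell c tn).Adj i j → W i j = 0)
    (S0 C1 C2 : Finset (Fin (c * tn)))
    (hS0ne : S0.Nonempty) (hS0card : 2 * S0.card ≤ c * tn)
    (hC1ne : C1.Nonempty) (hC2ne : C2.Nonempty)
    (hdisj : Disjoint C1 C2) (hunion : S0ᶜ = C1 ∪ C2)
    (hC1conn : ((cBarbell c tn).induce (C1 : Set (Fin (c * tn)))).Connected)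
    (hC2conn : ((cBarbell c tn).induce (C2 : Set (Fin (c * tn)))).Connected)
    (hnoedge : ∀ i ∈ C1, ∀ j ∈ C2, ¬(cBarbell c tn).Adj i j) :
    ∃ St : Finset (Fin (c * tn)), St.Nonempty ∧ St ≠ Finset.univ ∧
      subsetConductance W St < subsetConductance W S0 :=
  stmt10_general c tn W hnn hpos hzero S0 C1 C2 hS0ne hC1ne hC2ne hdisj hunion hnoedge
end

section
/- Let G be a connected simple graph on n ≥ 2 vertices with Laplacian matrix L, and let i ≠ j be any two vertices. Then for every vector v with L v = e_i − e_j, one has v_i − v_j ≥ 2/n; that is, the effective resistance between any two distinct vertices of a connected graph on n vertices is at least 2/n. -/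
/-!
Put `x = e_i - e_j` and `R = v_i - v_j`. From `L v = x` we get `vᵀ L v = R` and `xᵀ L v = xᵀ x = 2`.
Cauchy–Schwarz for the positive semidefinite form `L` gives `4 ≤ (xᵀ L x) · R`, and
`xᵀ L x = deg i + deg j + 2·[i ~ j] ≤ 2 n` because every degree is at most `n - 1`.
-/

open Matrix BigOperators Finset

section

variable {ι R : Type*} [Fintype ι] [CommRing R]

theorem Matrix.IsSymm.dotProduct_mulVec_comm {M : Matrix ι ι R} (hM : M.IsSymm) (x y : ι → R) :
    x ⬝ᵥ (M *ᵥ y) = y ⬝ᵥ (M *ᵥ x) := by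
  rw [dotProduct_mulVec, ← mulVec_transpose, hM.eq, dotProduct_comm]

theorem Matrix.IsSymm.dotProduct_mulVec_sq_le [LinearOrder R] [IsStrictOrderedRing R]
    {M : Matrix ι ι R} (hM : M.IsSymm) (hpos : ∀ x, 0 ≤ x ⬝ᵥ (M *ᵥ x)) (x y : ι → R) :
    (x ⬝ᵥ (M *ᵥ y)) ^ 2 ≤ (x ⬝ᵥ (M *ᵥ x)) * (y ⬝ᵥ (M *ᵥ y)) := by
  classical
  have hsymm : (toLinearMap₂' R M).IsSymm := LinearMap.isSymm_def.mpr fun x y => by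
    simp only [RingHom.id_apply, toLinearMap₂'_apply', hM.dotProduct_mulVec_comm x y]
  simpa only [toLinearMap₂'_apply'] using LinearMap.BilinForm.apply_sq_le_of_symm
    (toLinearMap₂' R M) (by simpa only [toLinearMap₂'_apply']) hsymm x y

theorem single_sub_single_dotProduct [DecidableEq ι] (i j : ι) (x : ι → R) :
    (Pi.single i 1 - Pi.single j 1) ⬝ᵥ x = x i - x j := by
  simp [sub_dotProduct]

end

namespace SimpleGraph

variable {V R : Type*} [Fintype V] [DecidableEq V] (G : SimpleGraph V) [DecidableRel G.Adj]

theorem lapMatrix_apply [Ring R] (i j : V) :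
    G.lapMatrix R i j = if i = j then (G.degree i : R) else if G.Adj i j then -1 else 0 := by
  simp only [lapMatrix, degMatrix, Matrix.sub_apply, diagonal_apply, adjMatrix_apply]
  split_ifs with h <;> simp_all

theorem dotProduct_lapMatrix_mulVec_single_sub_single [CommRing R] {i j : V} (hij : i ≠ j) :
    (Pi.single i 1 - Pi.single j 1) ⬝ᵥ (G.lapMatrix R *ᵥ (Pi.single i 1 - Pi.single j 1)) =
      G.degree i + G.degree j + if G.Adj i j then 2 else 0 := by
  simp only [single_sub_single_dotProduct, mulVec_sub, Pi.sub_apply, mulVec_single_one]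
  simp [lapMatrix_apply, hij, hij.symm, G.adj_comm j i]
  split_ifs <;> ring

theorem dotProduct_lapMatrix_mulVec_single_sub_single_le [CommRing R] [LinearOrder R]
    [IsStrictOrderedRing R] {i j : V} (hij : i ≠ j) :
    (Pi.single i 1 - Pi.single j 1) ⬝ᵥ (G.lapMatrix R *ᵥ (Pi.single i 1 - Pi.single j 1)) ≤
      2 * Fintype.card V := by
  have hi : (G.degree i : R) + 1 ≤ Fintype.card V := by exact_mod_cast G.degree_lt_card_verts i
  have hj : (G.degree j : R) + 1 ≤ Fintype.card V := by exact_mod_cast G.degree_lt_card_verts j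
  rw [G.dotProduct_lapMatrix_mulVec_single_sub_single hij]
  split_ifs <;> linarith

end SimpleGraph

theorem stmt15_general (n : ℕ) (G : SimpleGraph (Fin n)) [DecidableRel G.Adj]
    (i j : Fin n) (hij : i ≠ j) :
    ∀ v : Fin n → ℝ, G.lapMatrix ℝ *ᵥ v = stdBasisVec i - stdBasisVec j →
      2 / (n : ℝ) ≤ v i - v j := by
  intro v hv
  set L := G.lapMatrix ℝ
  set x : Fin n → ℝ := Pi.single i 1 - Pi.single j 1
  rw [stdBasisVec_eq_single, stdBasisVec_eq_single] at hv
  have hpos : ∀ w, 0 ≤ w ⬝ᵥ (L *ᵥ w) := by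
    simpa using (G.posSemidef_lapMatrix ℝ).dotProduct_mulVec_nonneg
  have hres : v ⬝ᵥ (L *ᵥ v) = v i - v j := by
    rw [hv, dotProduct_comm, single_sub_single_dotProduct]
  have hcross : x ⬝ᵥ (L *ᵥ v) = 2 := by
    rw [hv, single_sub_single_dotProduct]
    norm_num [hij, hij.symm]
  have hCS := (G.isSymm_lapMatrix (R := ℝ)).dotProduct_mulVec_sq_le hpos x v
  rw [hcross, hres] at hCS
  have hx : x ⬝ᵥ (L *ᵥ x) ≤ 2 * n := by
    simpa only [Fintype.card_fin] using G.dotProduct_lapMatrix_mulVec_single_sub_single_le hij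
  have hn : (0 : ℝ) < n := by exact_mod_cast i.pos
  rw [div_le_iff₀ hn]
  nlinarith [hres ▸ hpos v]

/-- The effective resistance between any two distinct vertices of a connected graph on `n`
vertices is at least `2/n`: every `v` with `L v = e_i − e_j` has `v_i − v_j ≥ 2/n`. -/
theorem stmt15 (n : ℕ) (hn : 2 ≤ n) (G : SimpleGraph (Fin n)) [DecidableRel G.Adj]
    (hconn : G.Connected) (i j : Fin n) (hij : i ≠ j) :
    ∀ v : Fin n → ℝ, G.lapMatrix ℝ *ᵥ v = stdBasisVec i - stdBasisVec j →
      2 / (n : ℝ) ≤ v i - v j :=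
  stmt15_general n G i j hij
end
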